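/- arXiv:2408.04049 — 2 statements merged into one kernel-verified Lean document; each statement's English description precedes it below -/
import Mathlib

section
/- Suppose W : (0,∞) → (0,∞) is C² and satisfies the self-similar curve shortening ODE 2W''(x)/(1+(W'(x))²) = -x·W'(x) + W(x) for all x > 0. Then the quantity log(1+(W'(x))²) - (x² + W(x)²)/2 - log((-x·W'(x) + W(x))²) is constant in x. -/
open Real

theorem stmt9 (W W' W'' : ℝ → ℝ)
    (hpos : ∀ x > 0, 0 < W x)
    (hderiv : ∀ x > 0, HasDerivAt W (W' x) x)
    (hderiv' : ∀ x > 0, HasDerivAt W' (W'' x) x)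
    (hC2 : ContinuousOn W'' (Set.Ioi 0))
    (hpos' : ∀ x > 0, 0 < -x * W' x + W x)
    (hODE : ∀ x > 0, 2 * W'' x / (1 + (W' x) ^ 2) = -x * W' x + W x) :
    ∀ x > 0, ∀ y > 0,
      Real.log (1 + (W' x) ^ 2) - (x ^ 2 + (W x) ^ 2) / 2
          - Real.log ((-x * W' x + W x) ^ 2)
        = Real.log (1 + (W' y) ^ 2) - (y ^ 2 + (W y) ^ 2) / 2
          - Real.log ((-y * W' y + W y) ^ 2) := by
  set F : ℝ → ℝ := fun x => Real.log (1 + (W' x) ^ 2) - (x ^ 2 + (W x) ^ 2) / 2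
      - Real.log ((-x * W' x + W x) ^ 2) with hF
  have key : ∀ x ∈ Set.Ioi (0:ℝ), HasDerivAt F 0 x := by
    intro x hx
    have hx0 : (0:ℝ) < x := hx
    have hp : (0:ℝ) < 1 + (W' x) ^ 2 := by positivity
    have hg : (0:ℝ) < -x * W' x + W x := hpos' x hx0
    have hg2 : (0:ℝ) < (-x * W' x + W x) ^ 2 := by positivity
    -- derivative of log(1 + W'^2)
    have h1 : HasDerivAt (fun x => Real.log (1 + (W' x) ^ 2))
        ((2 * W' x * W'' x) / (1 + (W' x) ^ 2)) x := by
      have hinner : HasDerivAt (fun x => 1 + (W' x) ^ 2) (2 * W' x * W'' x) x := by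
        have := ((hderiv' x hx0).pow 2).const_add 1
        simpa [mul_comm, mul_assoc, mul_left_comm] using this
      have h := (Real.hasDerivAt_log hp.ne').comp x hinner
      rw [div_eq_inv_mul]
      exact h
    -- derivative of (x^2 + W^2)/2
    have h2 : HasDerivAt (fun x => (x ^ 2 + (W x) ^ 2) / 2) (x + W x * W' x) x := by
      have hx2 : HasDerivAt (fun x : ℝ => x ^ 2) (2 * x) x := by
        simpa using (hasDerivAt_pow 2 x)
      have hw2 : HasDerivAt (fun x => (W x) ^ 2) (2 * W x * W' x) x := by
        simpa [mul_assoc] using (hderiv x hx0).fun_pow 2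
      have := (hx2.add hw2).div_const 2
      refine this.congr_deriv ?_
      ring
    -- derivative of log((-x W' + W)^2)
    have h3 : HasDerivAt (fun x => Real.log ((-x * W' x + W x) ^ 2))
        ((2 * (-x * W' x + W x) * (-x * W'' x)) / ((-x * W' x + W x) ^ 2)) x := by
      have hginner : HasDerivAt (fun x => -x * W' x + W x) (-x * W'' x) x := by
        have := (((hasDerivAt_id x).fun_neg.fun_mul (hderiv' x hx0)).fun_add (hderiv x hx0))
        refine this.congr_deriv ?_
        simp [id]
      have hsq : HasDerivAt (fun x => (-x * W' x + W x) ^ 2)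
          (2 * (-x * W' x + W x) * (-x * W'' x)) x := by
        simpa [mul_assoc] using hginner.fun_pow 2
      have h := (Real.hasDerivAt_log hg2.ne').comp x hsq
      rw [div_eq_inv_mul]
      exact h
    have hFd := (h1.fun_sub h2).fun_sub h3
    refine hFd.congr_deriv ?_
    have hode := hODE x hx0
    have h2w : 2 * W'' x = (-x * W' x + W x) * (1 + (W' x) ^ 2) := by
      field_simp at hode
      linarith [hode]
    have e1 : 2 * W' x * W'' x / (1 + (W' x) ^ 2) = W' x * (-x * W' x + W x) := by
      rw [show 2 * W' x * W'' x = W' x * (2 * W'' x) by ring, h2w,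
        show W' x * ((-x * W' x + W x) * (1 + (W' x) ^ 2))
          = (W' x * (-x * W' x + W x)) * (1 + (W' x) ^ 2) by ring,
        mul_div_assoc, div_self hp.ne', mul_one]
    have e2 : 2 * (-x * W' x + W x) * (-x * W'' x) / (-x * W' x + W x) ^ 2
        = -(x * (1 + (W' x) ^ 2)) := by
      rw [show 2 * (-x * W' x + W x) * (-x * W'' x)
          = (-x) * (2 * W'' x) * (-x * W' x + W x) by ring, h2w,
        show (-x) * ((-x * W' x + W x) * (1 + (W' x) ^ 2)) * (-x * W' x + W x)
          = (-(x * (1 + (W' x) ^ 2))) * (-x * W' x + W x) ^ 2 by ring,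
        mul_div_assoc, div_self hg2.ne', mul_one]
    rw [e1, e2]
    ring
  intro x hx y hy
  have hconv : Convex ℝ (Set.Ioi (0:ℝ)) := convex_Ioi 0
  have hdiff : DifferentiableOn ℝ F (Set.Ioi 0) := fun z hz =>
    (key z hz).differentiableAt.differentiableWithinAt
  have hfd : ∀ z ∈ Set.Ioi (0:ℝ), fderivWithin ℝ F (Set.Ioi 0) z = 0 := by
    intro z hz
    rw [fderivWithin_of_isOpen isOpen_Ioi hz]
    have := (key z hz).deriv
    ext t
    simp [← toSpanSingleton_deriv, this]
  exact hconv.is_const_of_fderivWithin_eq_zero hdiff hfd hx hy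
end

section
/- Let y be a smooth solution of graphical curve shortening flow y_t = y_{xx}/(1+y_x²) on ℝ × (0,∞), suppose 𝒜(x,t) := ∫_{-∞}^x y(s,t) ds is well-defined and smooth with 𝒜_t = arctan(y_x), and define ℋ := 𝒜 - 2t·arctan(y_x). Then ℋ satisfies ℋ_t - ℋ_{xx}/(1+y_x²) = -(arctan(y_x) + y_x/(1+y_x²)), which takes values in (-π/2 - 1/2, π/2 + 1/2). -/
open Real

private lemma hasDerivAt_partial {f : ℝ×ℝ → ℝ} {s : Set (ℝ×ℝ)} (hs : IsOpen s)
    (hf : ContDiffOn ℝ (⊤ : ℕ∞) f s) {L : ℝ → ℝ×ℝ} {v : ℝ×ℝ} {u : ℝ}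
    (hp : L u ∈ s) (hL : HasDerivAt L v u) :
    HasDerivAt (fun z => f (L z)) (fderiv ℝ f (L u) v) u := by
  have hd : DifferentiableAt ℝ f (L u) :=
    (hf.contDiffAt (hs.mem_nhds hp)).differentiableAt (by simp)
  exact hd.hasFDerivAt.comp_hasDerivAt u hL

private lemma hasDerivAt_partial2 {f : ℝ×ℝ → ℝ} {s : Set (ℝ×ℝ)} (hs : IsOpen s)
    (hf : ContDiffOn ℝ (⊤ : ℕ∞) f s) {L : ℝ → ℝ×ℝ} (v : ℝ×ℝ) {w : ℝ×ℝ} {u : ℝ}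
    (hp : L u ∈ s) (hL : HasDerivAt L w u) :
    HasDerivAt (fun z => fderiv ℝ f (L z) v) (fderiv ℝ (fderiv ℝ f) (L u) w v) u := by
  have hF : ContDiffOn ℝ (⊤ : ℕ∞) (fderiv ℝ f) s := hf.fderiv_of_isOpen hs (by simp)
  have hd : DifferentiableAt ℝ (fderiv ℝ f) (L u) :=
    (hF.contDiffAt (hs.mem_nhds hp)).differentiableAt (by simp)
  have h1 := hd.hasFDerivAt.clm_apply (hasFDerivAt_const v (L u))
  have h2 := h1.comp_hasDerivAt u hL
  simp at h2
  exact h2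

private lemma symm2 {f : ℝ×ℝ → ℝ} {s : Set (ℝ×ℝ)} (hs : IsOpen s)
    (hf : ContDiffOn ℝ (⊤ : ℕ∞) f s) {p : ℝ×ℝ} (hp : p ∈ s) (v w : ℝ×ℝ) :
    fderiv ℝ (fderiv ℝ f) p v w = fderiv ℝ (fderiv ℝ f) p w v :=
  ((hf.contDiffAt (hs.mem_nhds hp)).isSymmSndFDerivAt (by rw [minSmoothness_of_isRCLikeNormedField]; exact WithTop.coe_le_coe.2 (le_top : (2:ℕ∞) ≤ ⊤))) v w

theorem stmt13 (y A : ℝ → ℝ → ℝ)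
    (hy_smooth : ContDiffOn ℝ (⊤ : ℕ∞) (fun p : ℝ × ℝ => y p.1 p.2) (Set.univ ×ˢ Set.Ioi 0))
    (hA_smooth : ContDiffOn ℝ (⊤ : ℕ∞) (fun p : ℝ × ℝ => A p.1 p.2) (Set.univ ×ˢ Set.Ioi 0))
    (hPDE : ∀ x : ℝ, ∀ t > 0,
      deriv (fun t' => y x t') t =
        deriv (fun x' => deriv (fun x'' => y x'' t) x') x /
          (1 + (deriv (fun x' => y x' t) x) ^ 2))
    (hA_x : ∀ x : ℝ, ∀ t > 0, deriv (fun x' => A x' t) x = y x t)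
    (hA_t : ∀ x : ℝ, ∀ t > 0,
      deriv (fun t' => A x t') t = Real.arctan (deriv (fun x' => y x' t) x)) :
    ∀ x : ℝ, ∀ t > 0,
      (deriv (fun t' => A x t' - 2 * t' * Real.arctan (deriv (fun x' => y x' t') x)) t -
          deriv (fun x' =>
              deriv (fun x'' => A x'' t - 2 * t * Real.arctan (deriv (fun x''' => y x''' t) x'')) x') x /
            (1 + (deriv (fun x' => y x' t) x) ^ 2)
        = -(Real.arctan (deriv (fun x' => y x' t) x) +
            deriv (fun x' => y x' t) x / (1 + (deriv (fun x' => y x' t) x) ^ 2))) ∧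
      -(Real.arctan (deriv (fun x' => y x' t) x) +
          deriv (fun x' => y x' t) x / (1 + (deriv (fun x' => y x' t) x) ^ 2))
        ∈ Set.Ioo (-(π / 2 + 1 / 2)) (π / 2 + 1 / 2) := by
  intro x t ht
  have hU : IsOpen ((Set.univ : Set ℝ) ×ˢ Set.Ioi (0:ℝ)) := isOpen_univ.prod isOpen_Ioi
  have hmem : ∀ (x' : ℝ) {t' : ℝ}, 0 < t' →
      ((x', t') : ℝ×ℝ) ∈ ((Set.univ : Set ℝ) ×ˢ Set.Ioi (0:ℝ)) := fun x' t' ht' => ⟨trivial, ht'⟩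
  set f : ℝ×ℝ → ℝ := fun p => y p.1 p.2 with hf_def
  set g : ℝ×ℝ → ℝ := fun p => A p.1 p.2 with hg_def
  -- first-order partials of y
  have hx_y : ∀ (x' : ℝ) {t' : ℝ}, 0 < t' →
      HasDerivAt (fun x'' => y x'' t') (fderiv ℝ f (x',t') (1,0)) x' := by
    intro x' t' ht'
    exact hasDerivAt_partial hU hy_smooth (L := fun z => (z, t')) (hmem x' ht')
      ((hasDerivAt_id x').prodMk (hasDerivAt_const x' t'))
  have ht_y : ∀ (x' : ℝ) {t' : ℝ}, 0 < t' →
      HasDerivAt (fun t'' => y x' t'') (fderiv ℝ f (x',t') (0,1)) t' := by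
    intro x' t' ht'
    exact hasDerivAt_partial hU hy_smooth (L := fun z => (x', z)) (hmem x' ht')
      ((hasDerivAt_const t' x').prodMk (hasDerivAt_id t'))
  have hα : ∀ (x' : ℝ) {t' : ℝ}, 0 < t' →
      deriv (fun x'' => y x'' t') x' = fderiv ℝ f (x',t') (1,0) :=
    fun x' _ ht' => (hx_y x' ht').deriv
  -- abbreviations
  set a : ℝ := fderiv ℝ f (x,t) (1,0) with ha_def
  have ha : deriv (fun x' => y x' t) x = a := hα x ht
  have hden : (0:ℝ) < 1 + a ^ 2 := by positivity
  -- second-order partials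
  have hαx : ∀ x' : ℝ, HasDerivAt (fun x'' => deriv (fun x''' => y x''' t) x'')
      (fderiv ℝ (fderiv ℝ f) (x',t) (1,0) (1,0)) x' := by
    intro x'
    have heq : (fun x'' => deriv (fun x''' => y x''' t) x'') =
        (fun x'' => fderiv ℝ f (x'',t) (1,0)) := funext fun x'' => hα x'' ht
    rw [heq]
    exact hasDerivAt_partial2 hU hy_smooth (L := fun z => (z, t)) (1,0) (hmem x' ht)
      ((hasDerivAt_id x').prodMk (hasDerivAt_const x' t))
  have hαt : HasDerivAt (fun t' => deriv (fun x' => y x' t') x)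
      (fderiv ℝ (fderiv ℝ f) (x,t) (0,1) (1,0)) t := by
    have hbase : HasDerivAt (fun t' => fderiv ℝ f (x,t') (1,0))
        (fderiv ℝ (fderiv ℝ f) (x,t) (0,1) (1,0)) t :=
      hasDerivAt_partial2 hU hy_smooth (L := fun z => (x, z)) (1,0) (hmem x ht)
        ((hasDerivAt_const t x).prodMk (hasDerivAt_id t))
    apply hbase.congr_of_eventuallyEq
    filter_upwards [isOpen_Ioi.mem_nhds ht] with t' ht'
    exact hα x ht'
  have hytx : HasDerivAt (fun x' => deriv (fun t' => y x' t') t)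
      (fderiv ℝ (fderiv ℝ f) (x,t) (1,0) (0,1)) x := by
    have heq : (fun x' => deriv (fun t' => y x' t') t) =
        (fun x' => fderiv ℝ f (x',t) (0,1)) := funext fun x' => (ht_y x' ht).deriv
    rw [heq]
    exact hasDerivAt_partial2 hU hy_smooth (L := fun z => (z, t)) (0,1) (hmem x ht)
      ((hasDerivAt_id x).prodMk (hasDerivAt_const x t))
  have hsym : fderiv ℝ (fderiv ℝ f) (x,t) (0,1) (1,0) =
      fderiv ℝ (fderiv ℝ f) (x,t) (1,0) (0,1) :=
    symm2 hU hy_smooth (hmem x ht) (0,1) (1,0)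
  set b : ℝ := fderiv ℝ (fderiv ℝ f) (x,t) (1,0) (0,1) with hb_def
  -- time derivative of A
  have hA_td : HasDerivAt (fun t' => A x t') (fderiv ℝ g (x,t) (0,1)) t :=
    hasDerivAt_partial hU hA_smooth (L := fun z => (x, z)) (hmem x ht)
      ((hasDerivAt_const t x).prodMk (hasDerivAt_id t))
  have hc : fderiv ℝ g (x,t) (0,1) = Real.arctan a := by
    rw [← hA_td.deriv, hA_t x t ht, ha]
  -- T1
  have harc : HasDerivAt (fun t' => Real.arctan (deriv (fun x' => y x' t') x))
      (b / (1 + a ^ 2)) t := by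
    have h0 := hαt.arctan
    rw [hsym, ha] at h0
    convert h0 using 1
    ring
  have hmul : HasDerivAt (fun t' => 2 * t' * Real.arctan (deriv (fun x' => y x' t') x))
      (2 * 1 * Real.arctan (deriv (fun x' => y x' t) x) + 2 * t * (b / (1 + a ^ 2))) t :=
    ((hasDerivAt_id t).const_mul 2).mul harc
  have hT1 : deriv (fun t' => A x t' - 2 * t' * Real.arctan (deriv (fun x' => y x' t') x)) t =
      Real.arctan a - (2 * 1 * Real.arctan a + 2 * t * (b / (1 + a ^ 2))) := by
    rw [(hA_td.fun_sub hmul).deriv, hc, ha]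
  -- inner x-derivative
  have hinner : (fun x' =>
      deriv (fun x'' => A x'' t - 2 * t * Real.arctan (deriv (fun x''' => y x''' t) x'')) x') =
      (fun x' => y x' t - 2 * t * fderiv ℝ f (x',t) (0,1)) := by
    funext x'
    have hAx' : HasDerivAt (fun x'' => A x'' t) (y x' t) x' := by
      have h := hasDerivAt_partial hU hA_smooth (L := fun z => (z, t)) (hmem x' ht)
        ((hasDerivAt_id x').prodMk (hasDerivAt_const x' t))
      rwa [← h.deriv, hA_x x' t ht] at h
    have harc2 := (hαx x').arctan
    have h := (hAx'.fun_sub (harc2.const_mul (2 * t))).deriv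
    rw [h]
    have hpde := hPDE x' t ht
    rw [(hαx x').deriv, hα x' ht] at hpde
    rw [(ht_y x' ht).deriv] at hpde
    rw [hα x' ht, hpde]
    ring
  -- T2
  have houter : HasDerivAt (fun x' => y x' t - 2 * t * fderiv ℝ f (x',t) (0,1))
      (a - 2 * t * b) x := by
    have h2 : HasDerivAt (fun x' => fderiv ℝ f (x',t) (0,1)) b x :=
      hasDerivAt_partial2 hU hy_smooth (L := fun z => (z, t)) (0,1) (hmem x ht)
        ((hasDerivAt_id x).prodMk (hasDerivAt_const x t))
    exact (hx_y x ht).sub (h2.const_mul (2 * t))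
  have hT2 : deriv (fun x' =>
      deriv (fun x'' => A x'' t - 2 * t * Real.arctan (deriv (fun x''' => y x''' t) x'')) x') x =
      a - 2 * t * b := by
    rw [hinner]; exact houter.deriv
  constructor
  · rw [hT1, hT2, ha]
    field_simp
    ring
  · rw [ha]
    have h1 := Real.arctan_lt_pi_div_two a
    have h2 := Real.neg_pi_div_two_lt_arctan a
    have h3 : a / (1 + a ^ 2) ≤ 1 / 2 := by
      rw [div_le_iff₀ hden]
      nlinarith [sq_nonneg (a - 1)]
    have h4 : -(1 / 2) ≤ a / (1 + a ^ 2) := by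
      rw [le_div_iff₀ hden]
      nlinarith [sq_nonneg (a + 1)]
    rw [Set.mem_Ioo]
    constructor <;> nlinarith
end
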